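/- arXiv:1703.00216 — 2 statements merged into one kernel-verified Lean document; each statement's English description precedes it below -/
import Mathlib

section
/- Every finite game that admits an exact potential function possesses the finite improvement property: every sequence of asynchronous strict better-response updates is finite, and hence terminates at a pure Nash equilibrium. -/
/-- Finite improvement property: in a finite game with an exact potential function,
there is no infinite sequence of asynchronous strict better-response updates;
and any profile from which no strict better response exists is a pure Nash equilibrium. -/
theorem finite_improvement_property
    {I : Type*} [Fintype I] (S : I → Type*) [∀ i, Fintype (S i)]
    (U : I → (∀ i, S i) → ℝ) (Φ : (∀ i, S i) → ℝ)
    (hpot : ∀ (i : I) (s : ∀ i, S i) (si' : S i) [DecidableEq I],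
      U i s - U i (Function.update s i si')
        = Φ s - Φ (Function.update s i si')) :
    (¬ ∃ s : ℕ → (∀ i, S i), ∀ n : ℕ, ∃ i : I,
        (∀ j : I, j ≠ i → s (n + 1) j = s n j) ∧ U i (s n) < U i (s (n + 1))) ∧
    (∀ s : ∀ i, S i,
      (¬ ∃ (i : I) (s' : ∀ i, S i),
          (∀ j : I, j ≠ i → s' j = s j) ∧ U i s < U i s') →
      ∀ (i : I) (s' : ∀ i, S i), (∀ j : I, j ≠ i → s' j = s j) → U i s' ≤ U i s) := by
  classical
  constructor
  · rintro ⟨s, hs⟩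
    have hstep : ∀ n, Φ (s n) < Φ (s (n + 1)) := by
      intro n
      obtain ⟨i, hoff, hU⟩ := hs n
      have heq : s (n + 1) = Function.update (s n) i (s (n + 1) i) := by
        funext j
        by_cases hj : j = i
        · subst hj; simp
        · simp [Function.update_of_ne hj, hoff j hj]
      have := hpot i (s n) (s (n + 1) i)
      rw [← heq] at this
      linarith
    have hmono : StrictMono (fun n => Φ (s n)) := strictMono_nat_of_lt_succ hstep
    obtain ⟨m, k, hmk, heq⟩ := Finite.exists_ne_map_eq_of_infinite s
    rcases hmk.lt_or_gt with h | h
    · exact absurd (congrArg Φ heq) (hmono h).ne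
    · exact absurd (congrArg Φ heq.symm) (hmono h).ne
  · intro s hno i s' hoff
    by_contra h
    exact hno ⟨i, s', hoff, lt_of_not_ge h⟩
end

section
/- A finite Bayesian game in which each induced complete-information game (for each type profile) admits an exact potential function possesses a pure-strategy Bayesian Nash equilibrium. -/
open Finset

/-- A finite Bayesian game whose induced complete-information game for each type
profile admits an exact potential function possesses a pure-strategy Bayesian
Nash equilibrium (w.r.t. ex-ante expected utilities). -/
theorem bayesian_potential_game_has_pure_BNE
    {I : Type*} [Fintype I] [DecidableEq I]
    (A : I → Type*) [∀ i, Fintype (A i)] [∀ i, Nonempty (A i)]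
    (Θ : I → Type*) [∀ i, Fintype (Θ i)]
    (p : (∀ i, Θ i) → ℝ)
    (U : I → (∀ i, A i) → (∀ i, Θ i) → ℝ)
    (Φ : (∀ i, A i) → (∀ i, Θ i) → ℝ)
    (hpot : ∀ (θ : ∀ i, Θ i) (i : I) (a : ∀ i, A i) (ai' : A i),
      U i a θ - U i (Function.update a i ai') θ
        = Φ a θ - Φ (Function.update a i ai') θ)
    (EU : I → (∀ i, Θ i → A i) → ℝ)
    (hEU : ∀ (i : I) (s : ∀ i, Θ i → A i),
      EU i s = ∑ θ : ∀ i, Θ i, U i (fun j => s j (θ j)) θ * p θ) :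
    ∃ s : ∀ i, Θ i → A i, ∀ (i : I) (si' : Θ i → A i),
      EU i (Function.update s i si') ≤ EU i s := by
  classical
  set Ψ : (∀ i, Θ i → A i) → ℝ := fun s => ∑ θ : ∀ i, Θ i, Φ (fun j => s j (θ j)) θ * p θ
  obtain ⟨s, hs⟩ := Finite.exists_max Ψ
  refine ⟨s, fun i si' => ?_⟩
  have key : ∀ (t : ∀ i, Θ i → A i) (θ : ∀ i, Θ i),
      (fun j => Function.update t i si' j (θ j))
        = Function.update (fun j => t j (θ j)) i (si' (θ i)) := by
    intro t θ
    funext j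
    by_cases h : j = i
    · subst h; simp
    · simp [Function.update_of_ne h]
  have hdiff : EU i s - EU i (Function.update s i si') = Ψ s - Ψ (Function.update s i si') := by
    rw [hEU, hEU]
    simp only [Ψ, ← Finset.sum_sub_distrib, ← sub_mul]
    refine Finset.sum_congr rfl fun θ _ => ?_
    rw [key s θ, hpot θ i (fun j => s j (θ j)) (si' (θ i))]
  have := hs (Function.update s i si')
  linarith
end
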